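/- arXiv:0709.1458 — 3 statements merged into one kernel-verified Lean document; each statement's English description precedes it below -/
import Mathlib

section
/- There exists a unique formal power series S(z) = -z + O(z^2) with S(z) ≠ z satisfying (1+z)·e^{-z} = (1+S(z))·e^{-S(z)}, and its initial coefficients are S(z) = -z + (2/3)z^2 - (4/9)z^3 + (44/135)z^4 + O(z^5). -/
open PowerSeries Finset

/-- Composition `f(g(X))` of formal power series (valid when `g` has zero constant term). -/
noncomputable def psComp (f g : PowerSeries ℚ) : PowerSeries ℚ :=
  PowerSeries.mk fun n =>
    ∑ k ∈ Finset.range (n + 1), PowerSeries.coeff k f * PowerSeries.coeff n (g ^ k)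

/-- The formal power series of `e^{-z}`. -/
noncomputable def expNeg : PowerSeries ℚ :=
  PowerSeries.mk fun n => (-1) ^ n / Nat.factorial n

/-!
Write `g = (1 + z) e^{-z} = 1 - z²/2 + O(z³)`. Since `(1 + S) · e^{-S} = g ∘ S`, the equation says
`g ∘ S = g`. If `S` and `T` agree below degree `n ≥ 2`, the coefficients of `z^{n+1}` in `g ∘ S`
and `g ∘ T` differ by `2 g₂ s₁ (s_n - t_n)`, which is `s_n - t_n` when `s₁ = -1`: the equation in
degree `n + 1` determines `s_n` from the lower coefficients. This gives existence (by recursion) and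
uniqueness, and the first coefficients are read off from the equations in degrees 3, 4 and 5.
-/

theorem pow_add_dvd_pow_succ_sub_pow_succ {R : Type*} [CommRing R] {x a b : R}
    (ha : x ∣ a) (hb : x ∣ b) {N : ℕ} (hab : x ^ N ∣ a - b) (k : ℕ) :
    x ^ (N + k) ∣ a ^ (k + 1) - b ^ (k + 1) := by
  rw [← geom_sum₂_mul, pow_add, mul_comm (x ^ N)]
  refine mul_dvd_mul (dvd_sum fun i hi ↦ ?_) hab
  rw [add_tsub_cancel_right]
  calc x ^ k = x ^ i * x ^ (k - i) := by
        rw [← pow_add, Nat.add_sub_cancel' (Nat.lt_succ_iff.mp (mem_range.mp hi))]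
    _ ∣ a ^ i * b ^ (k - i) := mul_dvd_mul (pow_dvd_pow_of_dvd ha i) (pow_dvd_pow_of_dvd hb _)

namespace PowerSeries

variable {R : Type*} [CommRing R]

theorem coeff_pow_eq_zero_of_lt {S : R⟦X⟧} (hS : constantCoeff S = 0) {k m : ℕ} (h : m < k) :
    coeff m (S ^ k) = 0 :=
  X_pow_dvd_iff.mp (pow_dvd_pow_of_dvd (X_dvd_iff.mpr hS) k) m h

theorem X_pow_succ_dvd_of_dvd_of_coeff_eq_zero {φ : R⟦X⟧} {n : ℕ} (h : X ^ n ∣ φ)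
    (hn : coeff n φ = 0) : X ^ (n + 1) ∣ φ := by
  rw [X_pow_dvd_iff] at h ⊢
  intro m hm
  rcases Nat.lt_succ_iff_lt_or_eq.mp hm with hm | rfl
  exacts [h m hm, hn]

theorem coeff_succ_sq_sub_sq {S T : R⟦X⟧} (hS : X ∣ S) (hT : X ∣ T) {n : ℕ} (hn : 2 ≤ n)
    (hST : X ^ n ∣ S - T) :
    coeff (n + 1) (S ^ 2 - T ^ 2) = 2 * coeff 1 S * (coeff n S - coeff n T) := by
  have h1 : coeff 1 T = coeff 1 S := by
    have := X_pow_dvd_iff.mp hST 1 (by omega)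
    rwa [map_sub, sub_eq_zero, eq_comm] at this
  obtain ⟨U, hU⟩ := hST
  obtain ⟨V, hV⟩ := dvd_add hS hT
  have hsq : S ^ 2 - T ^ 2 = X ^ (n + 1) * (V * U) := by
    rw [sq_sub_sq, hV, hU]; ring
  have hU0 : constantCoeff U = coeff n (S - T) := by
    rw [hU, ← coeff_zero_eq_constantCoeff_apply, ← coeff_X_pow_mul U n 0, zero_add]
  have hV0 : constantCoeff V = coeff 1 (S + T) := by
    rw [hV, coeff_succ_X_mul, coeff_zero_eq_constantCoeff_apply]
  rw [hsq, coeff_X_pow_mul', if_pos le_rfl, Nat.sub_self, coeff_zero_eq_constantCoeff_apply,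
    map_mul, hU0, hV0, map_add, map_sub, h1]
  ring

end PowerSeries

theorem psComp_eq_subst {f S : ℚ⟦X⟧} (hS : constantCoeff S = 0) : psComp f S = f.subst S := by
  ext n
  rw [coeff_subst' (HasSubst.of_constantCoeff_zero' hS), finsum_eq_sum_of_support_subset _
    (s := range (n + 1)) fun k hk ↦ ?_]
  · simp [psComp]
  · by_contra hkn
    simp only [coe_range, Set.mem_Iio, not_lt] at hkn
    simp [coeff_pow_eq_zero_of_lt hS (Nat.lt_of_succ_le hkn)] at hk

theorem one_add_mul_psComp {S : ℚ⟦X⟧} (hS : constantCoeff S = 0) (f : ℚ⟦X⟧) :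
    (1 + S) * psComp f S = psComp ((1 + X) * f) S := by
  have hsub := HasSubst.of_constantCoeff_zero' hS
  rw [psComp_eq_subst hS, psComp_eq_subst hS, ← coe_substAlgHom hsub, map_mul, map_add, map_one,
    substAlgHom_X]

theorem coeff_succ_psComp_sub_psComp {f S T : ℚ⟦X⟧} (hf : coeff 1 f = 0)
    (hS : constantCoeff S = 0) (hT : constantCoeff T = 0) {n : ℕ} (hn : 2 ≤ n)
    (hST : X ^ n ∣ S - T) :
    coeff (n + 1) (psComp f S) - coeff (n + 1) (psComp f T) =
      2 * coeff 2 f * coeff 1 S * (coeff n S - coeff n T) := by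
  have hS' := X_dvd_iff.mpr hS
  have hT' := X_dvd_iff.mpr hT
  simp only [psComp, coeff_mk, ← sum_sub_distrib, ← mul_sub, ← map_sub]
  rw [sum_eq_single 2]
  · rw [coeff_succ_sq_sub_sq hS' hT' hn hST, map_sub]
    ring
  · intro k _ hk2
    match k, hk2 with
    | 0, _ => simp
    | 1, _ => rw [hf, zero_mul]
    | j + 3, _ =>
      have := pow_add_dvd_pow_succ_sub_pow_succ hS' hT' hST (j + 2)
      rw [X_pow_dvd_iff.mp this (n + 1) (by omega), mul_zero]
  · exact fun h ↦ absurd (mem_range.mpr (by omega : 2 < n + 2)) h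

theorem eq_of_psComp_eq_psComp {f S T : ℚ⟦X⟧} (hf1 : coeff 1 f = 0) (hf2 : coeff 2 f ≠ 0)
    (hS : constantCoeff S = 0) (hT : constantCoeff T = 0) (hST1 : coeff 1 S = coeff 1 T)
    (hS1 : coeff 1 S ≠ 0) (h : psComp f S = psComp f T) : S = T := by
  have hdvd : ∀ n, 2 ≤ n → X ^ n ∣ S - T := by
    refine Nat.le_induction ?_ fun n hn ih ↦ X_pow_succ_dvd_of_dvd_of_coeff_eq_zero ih ?_
    · refine X_pow_dvd_iff.mpr fun m hm ↦ ?_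
      interval_cases m
      · simp [hS, hT]
      · simp [hST1]
    · have := coeff_succ_psComp_sub_psComp hf1 hS hT hn ih
      rw [h, sub_self, eq_comm] at this
      simpa [hf2, hS1, sub_eq_zero] using this
  ext m
  simpa [sub_eq_zero] using X_pow_dvd_iff.mp (hdvd (m + 2) (by omega)) m (by omega)

theorem coeff_psComp_of_lt_three {f S : ℚ⟦X⟧} (hf : coeff 1 f = 0) (hS : constantCoeff S = 0)
    (hS1 : coeff 1 S = -1) {m : ℕ} (hm : m < 3) : coeff m (psComp f S) = coeff m f := by
  have hS0 : coeff 0 S = 0 := by rwa [coeff_zero_eq_constantCoeff_apply]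
  interval_cases m <;>
    simp [psComp, sum_range_succ, sq, coeff_mul, Nat.sum_antidiagonal_eq_sum_range_succ_mk, hf, hS0,
      hS1]

/-- The series inside is the truncation of `conjugateSeries f` below degree `n + 2`; by
`coeff_succ_psComp_sub_psComp` (with `s₁ = -1`) the value given is the only choice of the next
coefficient for which `psComp f (conjugateSeries f)` agrees with `f` in degree `n + 3`. -/
noncomputable def conjugateCoeff (f : ℚ⟦X⟧) : ℕ → ℚ
  | 0 => 0
  | 1 => -1
  | n + 2 =>
    (coeff (n + 3) (psComp f (mk fun i ↦ if i < n + 2 then conjugateCoeff f i else 0)) -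
      coeff (n + 3) f) / (2 * coeff 2 f)

noncomputable def conjugateSeries (f : ℚ⟦X⟧) : ℚ⟦X⟧ := mk (conjugateCoeff f)

@[simp]
theorem constantCoeff_conjugateSeries (f : ℚ⟦X⟧) : constantCoeff (conjugateSeries f) = 0 := by
  simp [conjugateSeries, ← coeff_zero_eq_constantCoeff_apply, conjugateCoeff]

@[simp]
theorem coeff_one_conjugateSeries (f : ℚ⟦X⟧) : coeff 1 (conjugateSeries f) = -1 := by
  simp [conjugateSeries, conjugateCoeff]

theorem psComp_conjugateSeries {f : ℚ⟦X⟧} (hf1 : coeff 1 f = 0) (hf2 : coeff 2 f ≠ 0) :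
    psComp f (conjugateSeries f) = f := by
  ext m
  rcases lt_or_ge m 3 with hm | hm
  · exact coeff_psComp_of_lt_three hf1 (constantCoeff_conjugateSeries f)
      (coeff_one_conjugateSeries f) hm
  obtain ⟨n, rfl⟩ := Nat.exists_eq_add_of_le' hm
  set T : ℚ⟦X⟧ := mk fun i ↦ if i < n + 2 then conjugateCoeff f i else 0 with hT
  have hT0 : constantCoeff T = 0 := by
    simp [hT, ← coeff_zero_eq_constantCoeff_apply, conjugateCoeff]
  have hST : X ^ (n + 2) ∣ conjugateSeries f - T :=
    X_pow_dvd_iff.mpr fun i hi ↦ by simp [hT, conjugateSeries, hi]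
  have key := coeff_succ_psComp_sub_psComp hf1 (constantCoeff_conjugateSeries f) hT0 (by omega) hST
  have hcoeff : coeff (n + 2) (conjugateSeries f) =
      (coeff (n + 3) (psComp f T) - coeff (n + 3) f) / (2 * coeff 2 f) := by
    simp [conjugateSeries, conjugateCoeff, hT]
  rw [hcoeff, coeff_one_conjugateSeries, hT, coeff_mk, if_neg (lt_irrefl _), sub_zero] at key
  field_simp at key
  linarith

theorem coeff_one_add_X_mul_expNeg (n : ℕ) :
    coeff n ((1 + X) * expNeg) = (-1) ^ n * (1 - n : ℚ) / n.factorial := by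
  cases n with
  | zero => simp [expNeg]
  | succ n =>
    rw [add_mul, one_mul, map_add, coeff_succ_X_mul]
    simp only [expNeg, coeff_mk, Nat.factorial_succ]
    push_cast
    field_simp
    ring

theorem coeff_two_three_four_of_psComp_eq {S : ℚ⟦X⟧} (hS : constantCoeff S = 0)
    (hS1 : coeff 1 S = -1) (h : psComp ((1 + X) * expNeg) S = (1 + X) * expNeg) :
    coeff 2 S = 2 / 3 ∧ coeff 3 S = -4 / 9 ∧ coeff 4 S = 44 / 135 := by
  have hS0 : coeff 0 S = 0 := by rwa [coeff_zero_eq_constantCoeff_apply]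
  have e (m : ℕ) := congrArg (coeff m) h
  simp only [psComp, coeff_mk, coeff_one_add_X_mul_expNeg] at e
  have e3 := e 3
  have e4 := e 4
  have e5 := e 5
  simp only [sum_range_succ, sum_range_zero, pow_succ, pow_zero, one_mul, coeff_mul,
    Nat.sum_antidiagonal_eq_sum_range_succ_mk, coeff_one, hS0, hS1] at e3 e4 e5
  norm_num [Nat.factorial] at e3 e4 e5
  have h2 : coeff 2 S = 2 / 3 := by linarith
  rw [h2] at e4 e5
  have h3 : coeff 3 S = -4 / 9 := by linarith
  rw [h3] at e5
  exact ⟨h2, h3, by linarith⟩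

/-- There is a unique formal power series `S(z) = -z + O(z²)` satisfying
`(1+z)e^{-z} = (1+S(z))e^{-S(z)}`, and its initial coefficients are
`S(z) = -z + (2/3)z² - (4/9)z³ + (44/135)z⁴ + O(z⁵)`. -/
theorem conjugate_involution_exists_unique :
    (∃! S : PowerSeries ℚ,
        PowerSeries.constantCoeff S = 0 ∧ PowerSeries.coeff 1 S = -1 ∧
          (1 + PowerSeries.X) * expNeg = (1 + S) * psComp expNeg S) ∧
      ∀ S : PowerSeries ℚ,
        PowerSeries.constantCoeff S = 0 → PowerSeries.coeff 1 S = -1 →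
          (1 + PowerSeries.X) * expNeg = (1 + S) * psComp expNeg S →
            PowerSeries.coeff 2 S = 2 / 3 ∧ PowerSeries.coeff 3 S = -4 / 9 ∧
              PowerSeries.coeff 4 S = 44 / 135 := by
  have hg1 : coeff 1 ((1 + X) * expNeg) = 0 := by norm_num [coeff_one_add_X_mul_expNeg]
  have hg2 : coeff 2 ((1 + X) * expNeg) ≠ 0 := by norm_num [coeff_one_add_X_mul_expNeg]
  have hS₀ := psComp_conjugateSeries hg1 hg2
  have equation_iff {S : ℚ⟦X⟧} (hS : constantCoeff S = 0) :
      (1 + X) * expNeg = (1 + S) * psComp expNeg S ↔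
        psComp ((1 + X) * expNeg) S = (1 + X) * expNeg := by
    rw [one_add_mul_psComp hS, eq_comm]
  refine ⟨⟨conjugateSeries _, ⟨by simp, by simp, (equation_iff (by simp)).mpr hS₀⟩, ?_⟩, ?_⟩
  · rintro S ⟨hS, hS1, hSeq⟩
    refine eq_of_psComp_eq_psComp hg1 hg2 hS (by simp) (by simp [hS1]) (by simp [hS1]) ?_
    rw [(equation_iff hS).mp hSeq, hS₀]
  · exact fun S hS hS1 hSeq ↦ coeff_two_three_four_of_psComp_eq hS hS1 ((equation_iff hS).mp hSeq)
end

section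
/- The curve -y^{f+1} + y^f - x = 0 (framed vertex mirror curve, f a positive integer), solved for y near (x,y) = (0,1), has the expansion y(x) = 1 - Σ_{n≥1} (x^n Π_{j=0}^{n-2}(nf+j) / n!); in particular the coefficient of x^n in 1 - y(x) is Π_{j=0}^{n-2}(nf+j)/n! = Γ(nf+n-1)/(Γ(nf)·n!). -/
/-!
Put `p = f + 1` and let `𝓑` be the solution of `𝓑 = 1 + X 𝓑 ^ p`. Then `y = 𝓑⁻¹` solves
`y ^ f (1 - y) = X`, and `1 - y = X 𝓑 ^ f` is `framedDisk f`, because the coefficient of `X ^ i`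
in `𝓑 ^ r` is `r / (i p + r) * C(i p + r, i)`. The latter holds since these explicit series `A r`
satisfy `A (r + 1) = A r + X A (r + p)` (Pascal's rule), and this recurrence determines a family
from `A 0` coefficient by coefficient; the powers of any solution of `𝓑 = 1 + X 𝓑 ^ p` satisfy
it as well, which also gives uniqueness.
-/

open PowerSeries

/-- The series `∑_{n≥1} (∏_{j=0}^{n-2}(nf+j)/n!) x^n`, i.e. `1 - y(x)` for the
framed vertex disk amplitude. -/
noncomputable def framedDisk (f : ℕ) : PowerSeries ℚ :=
  PowerSeries.mk fun n =>
    if n = 0 then 0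
    else (∏ j ∈ Finset.range (n - 1), ((n * f + j : ℕ) : ℚ)) / Nat.factorial n

open Finset

namespace PowerSeries

variable {R : Type*} [CommRing R] {p : ℕ}

theorem eq_zero_of_succ_eq_add_X_mul {D : ℕ → R⟦X⟧} (h0 : D 0 = 0)
    (hD : ∀ r, D (r + 1) = D r + X * D (r + p)) (r : ℕ) : D r = 0 := by
  ext n
  rw [map_zero]
  induction n generalizing r with
  | zero =>
    induction r with
    | zero => rw [h0, map_zero]
    | succ r ih => rw [hD, map_add, coeff_zero_X_mul, ih, add_zero]
  | succ n ihn =>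
    induction r with
    | zero => rw [h0, map_zero]
    | succ r ih => rw [hD, map_add, coeff_succ_X_mul, ih, ihn, add_zero]

theorem eq_of_succ_eq_add_X_mul {A B : ℕ → R⟦X⟧} (h0 : A 0 = B 0)
    (hA : ∀ r, A (r + 1) = A r + X * A (r + p)) (hB : ∀ r, B (r + 1) = B r + X * B (r + p)) :
    A = B := by
  funext r
  refine sub_eq_zero.mp (eq_zero_of_succ_eq_add_X_mul (D := fun r ↦ A r - B r) (p := p)
    (sub_eq_zero.mpr h0) (fun r ↦ ?_) r)
  rw [hA, hB]
  ring

theorem apply_add_of_succ_eq_add_X_mul {A : ℕ → R⟦X⟧} (h0 : A 0 = 1)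
    (hA : ∀ r, A (r + 1) = A r + X * A (r + p)) (r s : ℕ) : A (r + s) = A r * A s := by
  have key := eq_of_succ_eq_add_X_mul (p := p) (A := fun r ↦ A (r + s)) (B := fun r ↦ A r * A s)
    (by simp [h0]) (fun r ↦ by simp only [Nat.add_right_comm r 1 s, Nat.add_right_comm r p s, hA])
    (fun r ↦ by simp only [hA]; ring)
  exact congrFun key r

theorem apply_eq_pow_of_succ_eq_add_X_mul {A : ℕ → R⟦X⟧} (h0 : A 0 = 1)
    (hA : ∀ r, A (r + 1) = A r + X * A (r + p)) (r : ℕ) : A r = A 1 ^ r := by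
  induction r with
  | zero => rw [h0, pow_zero]
  | succ r ih => rw [apply_add_of_succ_eq_add_X_mul h0 hA, ih, pow_succ]

theorem apply_one_eq_one_add_X_mul_pow {A : ℕ → R⟦X⟧} (h0 : A 0 = 1)
    (hA : ∀ r, A (r + 1) = A r + X * A (r + p)) : A 1 = 1 + X * A 1 ^ p := by
  have h1 := hA 0
  rwa [zero_add, zero_add, h0, apply_eq_pow_of_succ_eq_add_X_mul h0 hA p] at h1

theorem eq_apply_one_of_eq_one_add_X_mul_pow {A : ℕ → R⟦X⟧} (h0 : A 0 = 1)
    (hA : ∀ r, A (r + 1) = A r + X * A (r + p)) {C : R⟦X⟧} (hC : C = 1 + X * C ^ p) :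
    C = A 1 := by
  have key := eq_of_succ_eq_add_X_mul (A := fun r ↦ C ^ r) (B := A) (p := p) (by simp [h0])
    (fun r ↦ by
      rw [pow_succ]
      nth_rw 2 [hC]
      ring) hA
  simpa using congrFun key 1

end PowerSeries

/-- `genBinomial p r = 𝓑_p ^ r`, where `𝓑_p = 1 + X 𝓑_p ^ p` is the generalized binomial series
(Graham–Knuth–Patashnik (5.58)–(5.60)); the case split avoids `0 / 0` at `i = r = 0`. -/
noncomputable def genBinomial (p r : ℕ) : ℚ⟦X⟧ :=
  mk fun i ↦ if i = 0 then 1 else r * (i * p + r).choose i / (i * p + r : ℕ)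

theorem coeff_genBinomial {r : ℕ} (hr : 0 < r) (p i : ℕ) :
    coeff i (genBinomial p r) = r * (i * p + r).choose i / (i * p + r : ℕ) := by
  rw [genBinomial, coeff_mk]
  split_ifs with hi
  · have : (r : ℚ) ≠ 0 := by positivity
    simp [hi, this]
  · rfl

theorem coeff_succ_genBinomial (p r i : ℕ) :
    coeff (i + 1) (genBinomial p r) =
      r * ((i + 1) * p + r).choose (i + 1) / ((i + 1) * p + r : ℕ) := by
  simp [genBinomial]

theorem genBinomial_zero (p : ℕ) : genBinomial p 0 = 1 := by
  ext i
  simp [genBinomial, coeff_one]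

theorem genBinomial_succ {p : ℕ} (hp : 0 < p) (r : ℕ) :
    genBinomial p (r + 1) = genBinomial p r + X * genBinomial p (r + p) := by
  ext i
  cases i with
  | zero => simp [genBinomial]
  | succ i =>
    rw [map_add, coeff_succ_X_mul, coeff_genBinomial (r := r + p) (by omega),
      coeff_succ_genBinomial, coeff_succ_genBinomial]
    set N := (i + 1) * p + r with hN
    rw [show (i + 1) * p + (r + 1) = N + 1 by ring, show i * p + (r + p) = N by rw [hN]; ring]
    have hN0 : (N : ℚ) ≠ 0 := by positivity
    have key : ((N + 1 : ℕ) : ℚ) * N.choose i = (N + 1).choose (i + 1) * (i + 1) := by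
      exact_mod_cast Nat.add_one_mul_choose_eq N i
    have pascal : ((N + 1).choose (i + 1) : ℚ) = N.choose i + N.choose (i + 1) := by
      exact_mod_cast Nat.choose_succ_succ N i
    have hNq : (N : ℚ) = (i + 1) * p + r := by push_cast [hN]; ring
    push_cast at key ⊢
    field_simp
    linear_combination
      ((N : ℚ) + 1) * r * pascal - (p : ℚ) * key + ((N + 1).choose (i + 1) : ℚ) * hNq

theorem prod_range_add_mul_eq_factorial_mul_choose (f k : ℕ) :
    (∏ j ∈ range k, ((k + 1) * f + j)) * ((k + 1) * f + k) =
      (k + 1).factorial * (f * ((k + 1) * f + k).choose k) := by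
  have hasc : (∏ j ∈ range k, ((k + 1) * f + j)) * ((k + 1) * f + k) =
      (k + 1).factorial * ((k + 1) * f + k).choose (k + 1) := by
    rw [← prod_range_succ (fun j ↦ (k + 1) * f + j), ← Nat.ascFactorial_eq_prod_range,
      Nat.ascFactorial_eq_factorial_mul_choose', ← add_assoc, Nat.add_sub_cancel]
  have hchoose : ((k + 1) * f + k).choose (k + 1) * (k + 1) =
      f * ((k + 1) * f + k).choose k * (k + 1) := by
    rw [Nat.choose_succ_right_eq, Nat.add_sub_cancel]
    ring
  rw [hasc, Nat.eq_of_mul_eq_mul_right k.succ_pos hchoose]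

theorem framedDisk_eq_X_mul_genBinomial (f : ℕ) : framedDisk f = X * genBinomial (f + 1) f := by
  ext n
  rcases n with _ | _ | k
  · simp [framedDisk]
  · simp [framedDisk, genBinomial]
  · rw [coeff_succ_X_mul, coeff_succ_genBinomial]
    simp only [framedDisk, coeff_mk, if_neg (Nat.succ_ne_zero _), Nat.add_sub_cancel]
    have h := prod_range_add_mul_eq_factorial_mul_choose f (k + 1)
    rw [div_eq_div_iff (by positivity) (by positivity),
      show (k + 1) * (f + 1) + f = (k + 1 + 1) * f + (k + 1) by ring]
    exact_mod_cast h.trans (by ring)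

theorem framed_vertex_disk_expansion_general (f : ℕ) :
    ((1 - framedDisk f) ^ f - (1 - framedDisk f) ^ (f + 1) = PowerSeries.X) ∧
      ∀ y : PowerSeries ℚ, PowerSeries.constantCoeff y = 1 →
        y ^ f - y ^ (f + 1) = PowerSeries.X → y = 1 - framedDisk f := by
  have h0 := genBinomial_zero (f + 1)
  have hrec := genBinomial_succ f.succ_pos
  set B := genBinomial (f + 1) 1
  have hB : B = 1 + X * B ^ (f + 1) := apply_one_eq_one_add_X_mul_pow h0 hrec
  have hz : framedDisk f = X * B ^ f := by
    rw [framedDisk_eq_X_mul_genBinomial, apply_eq_pow_of_succ_eq_add_X_mul h0 hrec]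
  have hinv : (1 - framedDisk f) * B = 1 := by
    rw [hz]
    linear_combination hB
  refine ⟨?_, fun y hy0 hy ↦ ?_⟩
  · calc (1 - framedDisk f) ^ f - (1 - framedDisk f) ^ (f + 1)
        = framedDisk f * (1 - framedDisk f) ^ f := by ring
      _ = X * ((1 - framedDisk f) * B) ^ f := by rw [mul_pow]; nth_rw 1 [hz]; ring
      _ = X := by rw [hinv, one_pow, mul_one]
  · have hyinv : y * y⁻¹ = 1 := PowerSeries.mul_inv_cancel y (by simp [hy0])
    have hyinv_pow (n : ℕ) : y ^ n * y⁻¹ ^ n = 1 := by rw [← mul_pow, hyinv, one_pow]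
    have hfix : y⁻¹ = 1 + X * y⁻¹ ^ (f + 1) := by
      linear_combination y⁻¹ ^ (f + 1) * hy - y⁻¹ * hyinv_pow f + hyinv_pow (f + 1)
    rw [eq_apply_one_of_eq_one_add_X_mul_pow h0 hrec hfix] at hyinv
    linear_combination (-y) * hinv + (1 - framedDisk f) * hyinv

/-- The framed vertex mirror curve `-y^{f+1} + y^f - x = 0` (`f` a positive integer),
solved for `y` near `(x,y) = (0,1)`, has the unique power series solution
`y(x) = 1 - ∑_{n≥1} (x^n ∏_{j=0}^{n-2}(nf+j)/n!)`: the coefficient of `x^n` in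
`1 - y(x)` is `∏_{j=0}^{n-2}(nf+j)/n!`. -/
theorem framed_vertex_disk_expansion (f : ℕ) (hf : 0 < f) :
    ((1 - framedDisk f) ^ f - (1 - framedDisk f) ^ (f + 1) = PowerSeries.X) ∧
      ∀ y : PowerSeries ℚ, PowerSeries.constantCoeff y = 1 →
        y ^ f - y ^ (f + 1) = PowerSeries.X → y = 1 - framedDisk f :=
  framed_vertex_disk_expansion_general f
end

section
/- Let P(z) be the unique formal power series with P(z) = -z + O(z^2) such that the two points y = f/(f+1) + z and ȳ = f/(f+1) + P(z) satisfy -y^{f+1} + y^f = -ȳ^{f+1} + ȳ^f. Then P(z) = -z - (2(f^2-1)/(3f))·z^2 - (4(f^2-1)^2/(9f^2))·z^3 + O(z^4). -/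
/-!
Write `g(z) = x(c + z)` with `x(y) = y^f - y^(f+1)` and `c = f/(f+1)` its critical point, so that
`g` has no linear term and `g₂ ≠ 0`. If power series `A, B` without constant term agree below
degree `n`, then the coefficient of `z^(n+1)` in `g(A) - g(B)` is `g₂ (A₁ + B₁) (Aₙ - Bₙ)`. When
`A₁ = B₁ = -1` this is an invertible multiple of `Aₙ - Bₙ`: it forces two solutions of
`g(P) = g(z)` to agree, and it lets the coefficients of `P` be solved for one at a time.
Comparing the coefficients of `z³` and `z⁴` in `g(P) = g(z)` gives `P₂ = -g₃/g₂` and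
`P₃ = -P₂²`, and for this `g` one computes `g₃/g₂ = 2(f² - 1)/(3f)`.
-/

theorem pow_succ_sub_pow_succ_dvd {R : Type*} [CommRing R] {x a b : R} {n : ℕ}
    (ha : x ∣ a) (hb : x ∣ b) (hab : x ^ n ∣ a - b) (i : ℕ) :
    x ^ (i + n) ∣ a ^ (i + 1) - b ^ (i + 1) := by
  rw [← geom_sum₂_mul, pow_add]
  refine mul_dvd_mul (Finset.dvd_sum fun j hj => ?_) hab
  have hji := Finset.mem_range_succ_iff.mp hj
  rw [show x ^ i = x ^ j * x ^ (i + 1 - 1 - j) by rw [← pow_add]; congr 1; omega]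
  exact mul_dvd_mul (pow_dvd_pow_of_dvd ha j) (pow_dvd_pow_of_dvd hb _)

theorem Nat.cast_choose_three {K : Type*} [Field K] [CharZero K] (n : ℕ) :
    (n.choose 3 : K) = n * (n - 1) * (n - 2) / 6 := by
  rcases n with _ | _ | m
  · simp
  · simp [Nat.choose_eq_zero_of_lt]
  · have h := Nat.choose_succ_right_eq (m + 2) 2
    rw [Nat.add_sub_cancel] at h
    have h' : ((m + 2).choose 3 : K) * 3 = ((m + 2).choose 2 : K) * m := by exact_mod_cast h
    rw [Nat.cast_choose_two] at h'
    push_cast at h' ⊢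
    linear_combination h' / 3

theorem Polynomial.coeff_C_add_X_pow_mul_pow {R : Type*} [CommRing R] (c : R) (n k : ℕ) :
    ((C c + X) ^ n).coeff k * c ^ k = n.choose k * c ^ n := by
  rw [add_comm, coeff_X_add_C_pow]
  rcases le_or_gt k n with hkn | hnk
  · rw [mul_comm, ← mul_assoc, ← pow_add, Nat.add_sub_cancel' hkn, mul_comm]
  · simp [Nat.choose_eq_zero_of_lt hnk]

open PowerSeries

namespace PowerSeries

section CommRing
variable {R : Type*} [CommRing R]

theorem aeval_X_eq_coe (g : Polynomial R) : Polynomial.aeval (X : R⟦X⟧) g = g := by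
  rw [Polynomial.aeval_def, ← Polynomial.eval₂_C_X_eq_coe]
  rfl

theorem coeff_succ_mul_of_X_pow_dvd {φ ψ : R⟦X⟧} {n : ℕ} (hφ : X ^ n ∣ φ)
    (hψ : constantCoeff ψ = 0) : coeff (n + 1) (φ * ψ) = coeff n φ * coeff 1 ψ := by
  obtain ⟨χ, rfl⟩ := hφ
  rw [mul_assoc, add_comm, coeff_X_pow_mul, coeff_X_pow_mul', if_pos le_rfl, Nat.sub_self]
  simp [coeff_mul, Finset.Nat.antidiagonal_succ, hψ]

theorem coeff_aeval_eq_sum_range (g : Polynomial R) {A : R⟦X⟧} (hA : constantCoeff A = 0)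
    {m n : ℕ} (hmn : m < n) :
    coeff m (Polynomial.aeval A g) = ∑ i ∈ Finset.range n, g.coeff i * coeff m (A ^ i) := by
  rw [Polynomial.aeval_eq_sum_range' (Nat.lt_add_left n g.natDegree.lt_succ_self),
    Finset.sum_range_add, map_add, map_sum, map_sum, add_eq_left.mpr]
  · simp only [coeff_smul, smul_eq_mul]
  · refine Finset.sum_eq_zero fun i _ => ?_
    have hdvd : X ^ (n + i) ∣ A ^ (n + i) := pow_dvd_pow_of_dvd (X_dvd_iff.mpr hA) _
    rw [coeff_smul, X_pow_dvd_iff.mp hdvd m (by omega), smul_zero]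

theorem coeff_zero_aeval (g : Polynomial R) {A : R⟦X⟧} (hA : constantCoeff A = 0) :
    coeff 0 (Polynomial.aeval A g) = g.coeff 0 := by
  simp [coeff_aeval_eq_sum_range g hA zero_lt_one]

theorem coeff_three_aeval (g : Polynomial R) {A : R⟦X⟧} (hA : constantCoeff A = 0) :
    coeff 3 (Polynomial.aeval A g) = g.coeff 1 * coeff 3 A + 2 * g.coeff 2 * coeff 1 A * coeff 2 A
      + g.coeff 3 * coeff 1 A ^ 3 := by
  rw [coeff_aeval_eq_sum_range g hA (by norm_num : 3 < 4)]
  rw [← coeff_zero_eq_constantCoeff_apply] at hA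
  simp only [Finset.sum_range_succ, Finset.sum_range_zero, pow_succ, pow_zero, one_mul, coeff_mul,
    Finset.Nat.sum_antidiagonal_eq_sum_range_succ_mk, hA, coeff_one, OfNat.ofNat_ne_zero, if_false]
  ring

theorem coeff_four_aeval (g : Polynomial R) {A : R⟦X⟧} (hA : constantCoeff A = 0) :
    coeff 4 (Polynomial.aeval A g) = g.coeff 1 * coeff 4 A
      + g.coeff 2 * (2 * coeff 1 A * coeff 3 A + coeff 2 A ^ 2)
      + 3 * g.coeff 3 * coeff 1 A ^ 2 * coeff 2 A + g.coeff 4 * coeff 1 A ^ 4 := by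
  rw [coeff_aeval_eq_sum_range g hA (by norm_num : 4 < 5)]
  rw [← coeff_zero_eq_constantCoeff_apply] at hA
  simp only [Finset.sum_range_succ, Finset.sum_range_zero, pow_succ, pow_zero, one_mul, coeff_mul,
    Finset.Nat.sum_antidiagonal_eq_sum_range_succ_mk, hA, coeff_one, OfNat.ofNat_ne_zero, if_false]
  ring

theorem coeff_succ_aeval_sub_aeval {g : Polynomial R} (hg : g.coeff 1 = 0) {A B : R⟦X⟧}
    (hA : constantCoeff A = 0) (hB : constantCoeff B = 0) {n : ℕ}
    (hAB : ∀ j < n, coeff j A = coeff j B) :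
    coeff (n + 1) (Polynomial.aeval A g - Polynomial.aeval B g) =
      g.coeff 2 * (coeff 1 A + coeff 1 B) * (coeff n A - coeff n B) := by
  have hdvd : X ^ n ∣ A - B := X_pow_dvd_iff.mpr fun j hj => by rw [map_sub, hAB j hj, sub_self]
  have hdeg : g.natDegree < g.natDegree + 3 := by omega
  rw [Polynomial.aeval_eq_sum_range' hdeg, Polynomial.aeval_eq_sum_range' hdeg,
    ← Finset.sum_sub_distrib, map_sum, Finset.sum_eq_single 2]
  · rw [← smul_sub, coeff_smul, sq_sub_sq, mul_comm,
      coeff_succ_mul_of_X_pow_dvd hdvd (by simp [hA, hB]), map_sub, map_add, smul_eq_mul]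
    ring
  · intro i _ hi
    rw [← smul_sub, coeff_smul]
    match i, hi with
    | 0, _ => simp
    | 1, _ => simp [hg]
    | i + 3, _ =>
      have := pow_succ_sub_pow_succ_dvd (X_dvd_iff.mpr hA) (X_dvd_iff.mpr hB) hdvd (i + 2)
      rw [X_pow_dvd_iff.mp this (n + 1) (by omega), smul_zero]
  · intro h
    simp at h

end CommRing

section DeckTransformation
variable {k : Type*} [Field k]

/-- By `coeff_succ_aeval_sub_aeval`, raising the coefficient of `z^(n+2)` by `t` changes the
coefficient of `z^(n+3)` in `g(P)` by `-2 g₂ t`; this choice makes it agree with that of `g(z)`. -/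
noncomputable def deckCoeff (g : Polynomial k) : ℕ → k
  | 0 => 0
  | 1 => -1
  | n + 2 => coeff (n + 3) (Polynomial.aeval X g -
      Polynomial.aeval (mk fun i => if i < n + 2 then deckCoeff g i else 0) g) / (-2 * g.coeff 2)

noncomputable def deckTransformation (g : Polynomial k) : k⟦X⟧ := mk (deckCoeff g)

theorem coeff_deckTransformation_add_two (g : Polynomial k) (n : ℕ) :
    coeff (n + 2) (deckTransformation g) = coeff (n + 3) (Polynomial.aeval X g -
      Polynomial.aeval (trunc (n + 2) (deckTransformation g) : k⟦X⟧) g) / (-2 * g.coeff 2) := by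
  rw [deckTransformation, coeff_mk, deckCoeff]
  congr
  ext i
  simp [coeff_trunc]

theorem constantCoeff_deckTransformation (g : Polynomial k) :
    constantCoeff (deckTransformation g) = 0 := by
  simp [deckTransformation, ← coeff_zero_eq_constantCoeff_apply, deckCoeff]

theorem coeff_one_deckTransformation (g : Polynomial k) :
    coeff 1 (deckTransformation g) = -1 := by
  simp [deckTransformation, deckCoeff]

variable [NeZero (2 : k)] {g : Polynomial k} (hg1 : g.coeff 1 = 0) (hg2 : g.coeff 2 ≠ 0)
include hg1 hg2

theorem aeval_deckTransformation :
    Polynomial.aeval (deckTransformation g) g = Polynomial.aeval X g := by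
  have hP0 := constantCoeff_deckTransformation g
  have hP1 := coeff_one_deckTransformation g
  rw [← sub_eq_zero]
  ext (_ | _ | _ | n)
  · rw [map_sub, coeff_zero_aeval g hP0, coeff_zero_aeval g constantCoeff_X, sub_self, map_zero]
  · rw [zero_add, coeff_succ_aeval_sub_aeval hg1 hP0 constantCoeff_X (n := 0) (by simp)]
    simp [hP0]
  · rw [coeff_succ_aeval_sub_aeval hg1 hP0 constantCoeff_X (n := 1) (by simp [hP0])]
    simp [hP1]
  · have hrec := coeff_deckTransformation_add_two g n
    set P := deckTransformation g
    set T : k⟦X⟧ := (trunc (n + 2) P : k⟦X⟧)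
    have hT0 : constantCoeff T = 0 := by
      simp [T, ← coeff_zero_eq_constantCoeff_apply, Polynomial.coeff_coe, coeff_trunc, hP0]
    have hPT : ∀ j < n + 2, coeff j P = coeff j T := fun j hj => by
      simp [T, Polynomial.coeff_coe, coeff_trunc, hj]
    have hTn : coeff (n + 2) T = 0 := by simp [T, Polynomial.coeff_coe, coeff_trunc]
    rw [← sub_add_sub_cancel _ (Polynomial.aeval T g), map_add,
      coeff_succ_aeval_sub_aeval hg1 hP0 hT0 hPT, ← hPT 1 (by omega), hP1, hTn, hrec,
      ← neg_sub (Polynomial.aeval X g), map_neg, map_zero]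
    field_simp
    ring

theorem eq_of_aeval_eq_aeval {P Q : k⟦X⟧} (hP0 : constantCoeff P = 0)
    (hQ0 : constantCoeff Q = 0) (hP1 : coeff 1 P = -1) (hQ1 : coeff 1 Q = -1)
    (h : Polynomial.aeval P g = Polynomial.aeval Q g) : P = Q := by
  ext n
  induction n using Nat.strong_induction_on with
  | _ n ih =>
    match n with
    | 0 => simp [hP0, hQ0]
    | 1 => rw [hP1, hQ1]
    | n + 2 =>
      have key := coeff_succ_aeval_sub_aeval hg1 hP0 hQ0 ih
      rw [h, sub_self, map_zero, hP1, hQ1, eq_comm] at key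
      have h2 : (-1 + -1 : k) ≠ 0 := by
        rw [← neg_add, neg_ne_zero]
        exact_mod_cast two_ne_zero
      rwa [mul_eq_zero, or_iff_right (mul_ne_zero hg2 h2), sub_eq_zero] at key

theorem existsUnique_aeval_X_eq_aeval :
    ∃! P : k⟦X⟧, constantCoeff P = 0 ∧ coeff 1 P = -1 ∧
      Polynomial.aeval X g = Polynomial.aeval P g :=
  ⟨deckTransformation g, ⟨constantCoeff_deckTransformation g, coeff_one_deckTransformation g,
    (aeval_deckTransformation hg1 hg2).symm⟩, fun _ ⟨hP0, hP1, hP⟩ =>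
    eq_of_aeval_eq_aeval hg1 hg2 hP0 (constantCoeff_deckTransformation g) hP1
      (coeff_one_deckTransformation g) (hP.symm.trans (aeval_deckTransformation hg1 hg2).symm)⟩

variable {P : k⟦X⟧} (hP0 : constantCoeff P = 0) (hP1 : coeff 1 P = -1)
  (hP : Polynomial.aeval X g = Polynomial.aeval P g)
include hP0 hP1 hP

theorem coeff_two_eq_of_aeval_X_eq_aeval : coeff 2 P = -(g.coeff 3 / g.coeff 2) := by
  have h3 := congrArg (coeff 3) hP
  rw [aeval_X_eq_coe, Polynomial.coeff_coe, coeff_three_aeval g hP0, hP1, hg1] at h3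
  field_simp
  refine mul_left_cancel₀ (two_ne_zero : (2 : k) ≠ 0) ?_
  linear_combination h3

theorem coeff_three_eq_of_aeval_X_eq_aeval : coeff 3 P = -coeff 2 P ^ 2 := by
  have h4 := congrArg (coeff 4) hP
  rw [aeval_X_eq_coe, Polynomial.coeff_coe, coeff_four_aeval g hP0, hP1, hg1,
    coeff_two_eq_of_aeval_X_eq_aeval hg1 hg2 hP0 hP1 hP] at h4
  rw [coeff_two_eq_of_aeval_X_eq_aeval hg1 hg2 hP0 hP1 hP]
  field_simp at h4 ⊢
  refine mul_left_cancel₀ (two_ne_zero : (2 : k) ≠ 0) ?_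
  linear_combination h4

end DeckTransformation

end PowerSeries

section FramedVertexPoly

/-- `x(f/(f+1) + z)` for `x(y) = y^f (1 - y)`; `f/(f+1)` is the critical point of `x`. -/
noncomputable def framedVertexPoly (f : ℕ) : Polynomial ℚ :=
  (Polynomial.C ((f : ℚ) / (f + 1)) + Polynomial.X) ^ f -
    (Polynomial.C ((f : ℚ) / (f + 1)) + Polynomial.X) ^ (f + 1)

variable (f : ℕ)

theorem aeval_framedVertexPoly (A : ℚ⟦X⟧) : Polynomial.aeval A (framedVertexPoly f) =
    (C ((f : ℚ) / (f + 1)) + A) ^ f - (C ((f : ℚ) / (f + 1)) + A) ^ (f + 1) := by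
  simp [framedVertexPoly]

theorem coeff_framedVertexPoly_mul_pow (k : ℕ) :
    (framedVertexPoly f).coeff k * ((f : ℚ) / (f + 1)) ^ k =
      ((f : ℚ) / (f + 1)) ^ f * (f.choose k - (f + 1).choose k * ((f : ℚ) / (f + 1))) := by
  rw [framedVertexPoly, Polynomial.coeff_sub, sub_mul, Polynomial.coeff_C_add_X_pow_mul_pow,
    Polynomial.coeff_C_add_X_pow_mul_pow, pow_succ]
  ring

variable {f} (hf : f ≠ 0)
include hf

theorem natCast_div_natCast_add_one_ne_zero : (f : ℚ) / (f + 1) ≠ 0 := by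
  have : (f : ℚ) ≠ 0 := Nat.cast_ne_zero.mpr hf
  positivity

theorem coeff_one_framedVertexPoly : (framedVertexPoly f).coeff 1 = 0 := by
  have h := coeff_framedVertexPoly_mul_pow f 1
  rw [Nat.choose_one_right, Nat.choose_one_right, pow_one, Nat.cast_succ,
    mul_div_cancel₀ _ (by positivity), sub_self, mul_zero] at h
  exact (mul_eq_zero.mp h).resolve_right (natCast_div_natCast_add_one_ne_zero hf)

theorem coeff_two_framedVertexPoly_mul_pow :
    (framedVertexPoly f).coeff 2 * ((f : ℚ) / (f + 1)) ^ 2 = -(((f : ℚ) / (f + 1)) ^ f * f / 2) := by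
  rw [coeff_framedVertexPoly_mul_pow, Nat.cast_choose_two, Nat.cast_choose_two]
  field_simp
  push_cast
  ring

theorem coeff_two_framedVertexPoly_ne_zero : (framedVertexPoly f).coeff 2 ≠ 0 := by
  intro h
  have := coeff_two_framedVertexPoly_mul_pow hf
  simp [h, natCast_div_natCast_add_one_ne_zero hf, hf] at this

theorem coeff_three_framedVertexPoly_mul_pow :
    (framedVertexPoly f).coeff 3 * ((f : ℚ) / (f + 1)) ^ 3 =
      -(((f : ℚ) / (f + 1)) ^ f * f * (f - 1) / 3) := by
  rw [coeff_framedVertexPoly_mul_pow, Nat.cast_choose_three, Nat.cast_choose_three]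
  field_simp
  push_cast
  ring

theorem coeff_three_div_coeff_two_framedVertexPoly :
    (framedVertexPoly f).coeff 3 / (framedVertexPoly f).coeff 2 =
      2 * ((f : ℚ) ^ 2 - 1) / (3 * f) := by
  have h2 := coeff_two_framedVertexPoly_mul_pow hf
  have h3 := coeff_three_framedVertexPoly_mul_pow hf
  have hf' : (f : ℚ) ≠ 0 := Nat.cast_ne_zero.mpr hf
  set c : ℚ := f / (f + 1)
  have hc : ((f : ℚ) + 1) * c = f := mul_div_cancel₀ _ (by positivity)
  rw [div_eq_div_iff (coeff_two_framedVertexPoly_ne_zero hf) (by positivity)]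
  refine mul_right_cancel₀ (pow_ne_zero 3 (natCast_div_natCast_add_one_ne_zero hf)) ?_
  linear_combination (3 * f) * h3 - (2 * (f ^ 2 - 1) * c) * h2 + (c ^ f * f * (f - 1)) * hc

end FramedVertexPoly

/-- Let `P(z) = -z + O(z²)` be the unique formal power series such that the two points
`y = f/(f+1) + z` and `ȳ = f/(f+1) + P(z)` satisfy `-y^{f+1} + y^f = -ȳ^{f+1} + ȳ^f`.
Then `P(z) = -z - (2(f²-1)/(3f))z² - (4(f²-1)²/(9f²))z³ + O(z⁴)`. -/
theorem framed_vertex_involution (f : ℕ) (hf : 2 ≤ f) :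
    (∃! P : PowerSeries ℚ,
        PowerSeries.constantCoeff (R := ℚ) P = 0 ∧ PowerSeries.coeff (R := ℚ) 1 P = -1 ∧
          (PowerSeries.C (R := ℚ) ((f : ℚ) / (f + 1)) + PowerSeries.X) ^ f -
              (PowerSeries.C (R := ℚ) ((f : ℚ) / (f + 1)) + PowerSeries.X) ^ (f + 1) =
            (PowerSeries.C (R := ℚ) ((f : ℚ) / (f + 1)) + P) ^ f -
              (PowerSeries.C (R := ℚ) ((f : ℚ) / (f + 1)) + P) ^ (f + 1)) ∧
      ∀ P : PowerSeries ℚ,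
        PowerSeries.constantCoeff (R := ℚ) P = 0 → PowerSeries.coeff (R := ℚ) 1 P = -1 →
          (PowerSeries.C (R := ℚ) ((f : ℚ) / (f + 1)) + PowerSeries.X) ^ f -
              (PowerSeries.C (R := ℚ) ((f : ℚ) / (f + 1)) + PowerSeries.X) ^ (f + 1) =
            (PowerSeries.C (R := ℚ) ((f : ℚ) / (f + 1)) + P) ^ f -
              (PowerSeries.C (R := ℚ) ((f : ℚ) / (f + 1)) + P) ^ (f + 1) →
            PowerSeries.coeff (R := ℚ) 2 P = -(2 * ((f : ℚ) ^ 2 - 1)) / (3 * f) ∧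
              PowerSeries.coeff (R := ℚ) 3 P = -(4 * ((f : ℚ) ^ 2 - 1) ^ 2) / (9 * (f : ℚ) ^ 2) := by
  have hf0 : f ≠ 0 := by omega
  have hg1 := coeff_one_framedVertexPoly hf0
  have hg2 := coeff_two_framedVertexPoly_ne_zero hf0
  simp only [← aeval_framedVertexPoly]
  refine ⟨PowerSeries.existsUnique_aeval_X_eq_aeval hg1 hg2, fun P hP0 hP1 hP => ?_⟩
  have h2 := PowerSeries.coeff_two_eq_of_aeval_X_eq_aeval hg1 hg2 hP0 hP1 hP
  rw [PowerSeries.coeff_three_eq_of_aeval_X_eq_aeval hg1 hg2 hP0 hP1 hP, h2,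
    coeff_three_div_coeff_two_framedVertexPoly hf0]
  constructor <;> ring
end
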